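/- Mean curvature vector of the meridian surface of elliptic type: for all (u,v) ∈ I × J, the vector H := (1/2)(∂²z/∂u² + (1/f²)·∂²z/∂v² + (f′/f)·∂z/∂u) equals (κ(v)/(2f(u)))·n₁(v) + ((f(u)·κ_m(u) + g′(u))/(2f(u)))·n₂(u,v); in particular H is normal to the surface, i.e. ⟨H, ∂z/∂u⟩ = ⟨H, ∂z/∂v⟩ = 0, and ⟨H,H⟩ = (κ² − (f·κ_m + g′)²)/(4f²). -/

import Mathlib

noncomputable section

/-- The Minkowski inner product on `ℝ⁴` of signature `(3,1)`:
`⟨x,y⟩ = x₁y₁ + x₂y₂ + x₃y₃ − x₄y₄`. -/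
def mink (x y : Fin 4 → ℝ) : ℝ :=
  x 0 * y 0 + x 1 * y 1 + x 2 * y 2 - x 3 * y 3

/-- The fourth standard basis vector `e₄` of `ℝ⁴`. -/
def e4 : Fin 4 → ℝ := fun i => if i = 3 then 1 else 0

/-- The wedge product `a ∧ b`, an antisymmetric `4 × 4` real matrix with entries
`(a ∧ b)_{ij} = aᵢbⱼ − aⱼbᵢ`. -/
def wedge (a b : Fin 4 → ℝ) : Fin 4 → Fin 4 → ℝ :=
  fun i j => a i * b j - a j * b i

/-- Elliptic meridian data in Minkowski 4-space: nonempty open intervals `I, J ⊆ ℝ`,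
smooth functions `f, g : I → ℝ` with `f > 0` and `f′² − g′² = 1` on `I`, and smooth maps
`l, n : J → ℝ⁴` with values in the hyperplane `{x₄ = 0}` such that `⟨l,l⟩ ≡ 1`,
`⟨t,t⟩ ≡ 1` where `t := l′`, `⟨n,n⟩ ≡ 1`, `⟨l,n⟩ ≡ 0`, `⟨t,n⟩ ≡ 0` on `J`. -/
structure EllipticData where
  I : Set ℝ
  J : Set ℝ
  hI : IsOpen I
  hJ : IsOpen J
  hIne : I.Nonempty
  hJne : J.Nonempty
  hIconn : I.OrdConnected
  hJconn : J.OrdConnected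
  f : ℝ → ℝ
  g : ℝ → ℝ
  hf : ContDiffOn ℝ (⊤ : ℕ∞) f I
  hg : ContDiffOn ℝ (⊤ : ℕ∞) g I
  hfpos : ∀ u ∈ I, 0 < f u
  hunit : ∀ u ∈ I, (deriv f u) ^ 2 - (deriv g u) ^ 2 = 1
  l : ℝ → Fin 4 → ℝ
  n : ℝ → Fin 4 → ℝ
  hl : ContDiffOn ℝ (⊤ : ℕ∞) l J
  hn : ContDiffOn ℝ (⊤ : ℕ∞) n J
  hlplane : ∀ v ∈ J, l v 3 = 0
  hnplane : ∀ v ∈ J, n v 3 = 0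
  hll : ∀ v ∈ J, mink (l v) (l v) = 1
  htt : ∀ v ∈ J, mink (deriv l v) (deriv l v) = 1
  hnn : ∀ v ∈ J, mink (n v) (n v) = 1
  hln : ∀ v ∈ J, mink (l v) (n v) = 0
  htn : ∀ v ∈ J, mink (deriv l v) (n v) = 0

namespace EllipticData

variable (d : EllipticData)

/-- The unit tangent `t := l′` of the curve `c` on `S²(1)`. -/
def t : ℝ → Fin 4 → ℝ := fun v => deriv d.l v

/-- The spherical curvature `κ := ⟨t′, n⟩` of the curve `c`. -/
def kappa : ℝ → ℝ := fun v => mink (deriv d.t v) (d.n v)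

/-- The curvature `κ_m := f′g″ − g′f″` of the meridian curve `m`. -/
def kappaM : ℝ → ℝ := fun u =>
  deriv d.f u * deriv (deriv d.g) u - deriv d.g u * deriv (deriv d.f) u

/-- The meridian surface of elliptic type `z(u,v) := f(u)·l(v) + g(u)·e₄`. -/
def z : ℝ → ℝ → Fin 4 → ℝ := fun u v => d.f u • d.l v + d.g u • e4

/-- The tangent frame vector `x := f′·l + g′·e₄`. -/
def x : ℝ → ℝ → Fin 4 → ℝ := fun u v => deriv d.f u • d.l v + deriv d.g u • e4

/-- The normal frame vector `n₂ := g′·l + f′·e₄`. -/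
def n2 : ℝ → ℝ → Fin 4 → ℝ := fun u v => deriv d.g u • d.l v + deriv d.f u • e4

/-- The Gauss map `G := x ∧ y` (with `y = t`). -/
def G : ℝ → ℝ → Fin 4 → Fin 4 → ℝ := fun u v => wedge (d.x u v) (d.t v)

/-- The Laplacian of the Gauss map with respect to the induced metric `du² + f(u)²dv²`:
`ΔG := −(∂²G/∂u² + (1/f²)·∂²G/∂v² + (f′/f)·∂G/∂u)`, computed entrywise. -/
def lapG : ℝ → ℝ → Fin 4 → Fin 4 → ℝ := fun u v =>
  -(deriv (fun u' => deriv (fun u'' => d.G u'' v) u') u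
    + (1 / (d.f u) ^ 2) • deriv (fun v' => deriv (fun v'' => d.G u v'') v') v
    + (deriv d.f u / d.f u) • deriv (fun u' => d.G u' v) u)

/-- The mean curvature vector
`H := (1/2)(∂²z/∂u² + (1/f²)·∂²z/∂v² + (f′/f)·∂z/∂u)`. -/
def H : ℝ → ℝ → Fin 4 → ℝ := fun u v =>
  (1 / 2 : ℝ) • (deriv (fun u' => deriv (fun u'' => d.z u'' v) u') u
    + (1 / (d.f u) ^ 2) • deriv (fun v' => deriv (fun v'' => d.z u v'') v') v
    + (deriv d.f u / d.f u) • deriv (fun u' => d.z u' v) u)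

end EllipticData

section Aux

lemma smoothOn_hasDerivAt {F : Type*} [NormedAddCommGroup F] [NormedSpace ℝ F]
    {f : ℝ → F} {s : Set ℝ} (hs : IsOpen s) (hf : ContDiffOn ℝ (⊤ : ℕ∞) f s)
    {u : ℝ} (hu : u ∈ s) : HasDerivAt f (deriv f u) u :=
  ((hf.contDiffAt (hs.mem_nhds hu)).differentiableAt (by simp)).hasDerivAt

lemma deriv_congr_on {F : Type*} [NormedAddCommGroup F] [NormedSpace ℝ F]
    {f g : ℝ → F} {s : Set ℝ} (hs : IsOpen s) {u : ℝ} (hu : u ∈ s)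
    (h : ∀ x ∈ s, f x = g x) : deriv f u = deriv g u :=
  Filter.EventuallyEq.deriv_eq (by filter_upwards [hs.mem_nhds hu] using h)

lemma deriv_zero_of_const_on {f : ℝ → ℝ} {c D : ℝ} {s : Set ℝ} (hs : IsOpen s) {u : ℝ}
    (hu : u ∈ s) (hD : HasDerivAt f D u) (h : ∀ x ∈ s, f x = c) : D = 0 := by
  have h1 : deriv f u = deriv (fun _ : ℝ => c) u := deriv_congr_on hs hu h
  rw [hD.deriv] at h1
  simpa using h1

lemma mink_add_left (a b c : Fin 4 → ℝ) : mink (a + b) c = mink a c + mink b c := by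
  simp only [mink, Pi.add_apply]; ring

lemma mink_add_right (a b c : Fin 4 → ℝ) : mink a (b + c) = mink a b + mink a c := by
  simp only [mink, Pi.add_apply]; ring

lemma mink_smul_left (r : ℝ) (a b : Fin 4 → ℝ) : mink (r • a) b = r * mink a b := by
  simp only [mink, Pi.smul_apply, smul_eq_mul]; ring

lemma mink_smul_right (r : ℝ) (a b : Fin 4 → ℝ) : mink a (r • b) = r * mink a b := by
  simp only [mink, Pi.smul_apply, smul_eq_mul]; ring

lemma mink_comm (a b : Fin 4 → ℝ) : mink a b = mink b a := by
  simp only [mink]; ring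

lemma hasDerivAt_mink {a b : ℝ → Fin 4 → ℝ} {a' b' : Fin 4 → ℝ} {v : ℝ}
    (ha : HasDerivAt a a' v) (hb : HasDerivAt b b' v) :
    HasDerivAt (fun w => mink (a w) (b w)) (mink a' (b v) + mink (a v) b') v := by
  have hai : ∀ i, HasDerivAt (fun w => a w i) (a' i) v := hasDerivAt_pi.1 ha
  have hbi : ∀ i, HasDerivAt (fun w => b w i) (b' i) v := hasDerivAt_pi.1 hb
  have := ((((hai 0).mul (hbi 0)).add ((hai 1).mul (hbi 1))).add
      ((hai 2).mul (hbi 2))).sub ((hai 3).mul (hbi 3))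
  have he : mink a' (b v) + mink (a v) b'
      = a' 0 * b v 0 + a v 0 * b' 0 + (a' 1 * b v 1 + a v 1 * b' 1)
        + (a' 2 * b v 2 + a v 2 * b' 2) - (a' 3 * b v 3 + a v 3 * b' 3) := by
    simp only [mink]; ring
  rw [he]
  exact this

/-- Completeness relation: three `mink`-orthonormal vectors in the hyperplane `{x₄ = 0}`
span it. -/
lemma ortho3 {a b c w : Fin 4 → ℝ}
    (ha4 : a 3 = 0) (hb4 : b 3 = 0) (hc4 : c 3 = 0) (hw4 : w 3 = 0)
    (haa : mink a a = 1) (hbb : mink b b = 1) (hcc : mink c c = 1)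
    (hab : mink a b = 0) (hac : mink a c = 0) (hbc : mink b c = 0) :
    w = mink w a • a + mink w b • b + mink w c • c := by
  simp only [mink, ha4, hb4, hc4, hw4, mul_zero, zero_mul, sub_zero]
    at haa hbb hcc hab hac hbc ⊢
  set M : Matrix (Fin 3) (Fin 3) ℝ :=
    !![a 0, a 1, a 2; b 0, b 1, b 2; c 0, c 1, c 2] with hM
  set N : Matrix (Fin 3) (Fin 3) ℝ :=
    !![a 0, b 0, c 0; a 1, b 1, c 1; a 2, b 2, c 2] with hN
  have h1 : M * N = 1 := by
    ext i j
    fin_cases i <;> fin_cases j <;>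
      simp [hM, hN, Matrix.mul_apply, Fin.sum_univ_three, Matrix.one_apply] <;>
      linarith [haa, hbb, hcc, hab, hac, hbc]
  have h2 : N * M = 1 := mul_eq_one_comm.mp h1
  have key : ∀ i j : Fin 3, (N * M) i j = (1 : Matrix (Fin 3) (Fin 3) ℝ) i j :=
    fun i j => congrFun (congrFun h2 i) j
  have k00 : a 0 * a 0 + b 0 * b 0 + c 0 * c 0 = 1 := by
    have h := key 0 0; simp [hM, hN, Matrix.mul_apply, Fin.sum_univ_three] at h
    linear_combination h
  have k01 : a 0 * a 1 + b 0 * b 1 + c 0 * c 1 = 0 := by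
    have h := key 0 1; simp [hM, hN, Matrix.mul_apply, Fin.sum_univ_three] at h
    linear_combination h
  have k02 : a 0 * a 2 + b 0 * b 2 + c 0 * c 2 = 0 := by
    have h := key 0 2; simp [hM, hN, Matrix.mul_apply, Fin.sum_univ_three] at h
    linear_combination h
  have k11 : a 1 * a 1 + b 1 * b 1 + c 1 * c 1 = 1 := by
    have h := key 1 1; simp [hM, hN, Matrix.mul_apply, Fin.sum_univ_three] at h
    linear_combination h
  have k12 : a 1 * a 2 + b 1 * b 2 + c 1 * c 2 = 0 := by
    have h := key 1 2; simp [hM, hN, Matrix.mul_apply, Fin.sum_univ_three] at h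
    linear_combination h
  have k22 : a 2 * a 2 + b 2 * b 2 + c 2 * c 2 = 1 := by
    have h := key 2 2; simp [hM, hN, Matrix.mul_apply, Fin.sum_univ_three] at h
    linear_combination h
  funext i
  fin_cases i <;>
    simp only [Pi.add_apply, Pi.smul_apply, smul_eq_mul, Fin.zero_eta, Fin.mk_one,
      Fin.reduceFinMk]
  · linear_combination -(w 0 * k00) - w 1 * k01 - w 2 * k02
  · linear_combination -(w 0 * k01) - w 1 * k11 - w 2 * k12
  · linear_combination -(w 0 * k02) - w 1 * k12 - w 2 * k22
  · rw [ha4, hb4, hc4, hw4]; ring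

end Aux

/-- **Mean curvature vector of the meridian surface of elliptic type**: for all
`(u,v) ∈ I × J`, `H = (κ/(2f))·n₁ + ((f·κ_m + g′)/(2f))·n₂`; in particular `H` is
normal to the surface, i.e. `⟨H, z_u⟩ = ⟨H, z_v⟩ = 0`, and
`⟨H,H⟩ = (κ² − (f·κ_m + g′)²)/(4f²)` (here `n₁ = n`). -/
theorem mean_curvature_vector_elliptic (d : EllipticData) :
    ∀ u ∈ d.I, ∀ v ∈ d.J,
      d.H u v = (d.kappa v / (2 * d.f u)) • d.n v
          + ((d.f u * d.kappaM u + deriv d.g u) / (2 * d.f u)) • d.n2 u v ∧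
      mink (d.H u v) (deriv (fun u' => d.z u' v) u) = 0 ∧
      mink (d.H u v) (deriv (fun v' => d.z u v') v) = 0 ∧
      mink (d.H u v) (d.H u v)
        = (d.kappa v ^ 2 - (d.f u * d.kappaM u + deriv d.g u) ^ 2) / (4 * (d.f u) ^ 2) := by
  intro u hu v hv
  -- basic derivative existence
  have hfD : ∀ x ∈ d.I, HasDerivAt d.f (deriv d.f x) x :=
    fun x hx => smoothOn_hasDerivAt d.hI d.hf hx
  have hgD : ∀ x ∈ d.I, HasDerivAt d.g (deriv d.g x) x :=
    fun x hx => smoothOn_hasDerivAt d.hI d.hg hx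
  have hfD2 : ∀ x ∈ d.I, HasDerivAt (deriv d.f) (deriv (deriv d.f) x) x :=
    fun x hx => smoothOn_hasDerivAt d.hI (d.hf.deriv_of_isOpen d.hI (by simp)) hx
  have hgD2 : ∀ x ∈ d.I, HasDerivAt (deriv d.g) (deriv (deriv d.g) x) x :=
    fun x hx => smoothOn_hasDerivAt d.hI (d.hg.deriv_of_isOpen d.hI (by simp)) hx
  have hlD : ∀ w ∈ d.J, HasDerivAt d.l (d.t w) w :=
    fun w hw => smoothOn_hasDerivAt d.hJ d.hl hw
  have htD : ∀ w ∈ d.J, HasDerivAt d.t (deriv d.t w) w := by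
    intro w hw
    have : ContDiffOn ℝ (⊤ : ℕ∞) (deriv d.l) d.J := d.hl.deriv_of_isOpen d.hJ (by simp)
    exact smoothOn_hasDerivAt d.hJ this hw
  -- 4th components of t and t' vanish
  have ht4 : ∀ w ∈ d.J, d.t w 3 = 0 := by
    intro w hw
    have h1 : HasDerivAt (fun s => d.l s 3) (d.t w 3) w := (hasDerivAt_pi.1 (hlD w hw)) 3
    exact deriv_zero_of_const_on d.hJ hw h1 d.hlplane
  have ht'4 : (deriv d.t v) 3 = 0 := by
    have h1 : HasDerivAt (fun s => d.t s 3) ((deriv d.t v) 3) v :=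
      (hasDerivAt_pi.1 (htD v hv)) 3
    exact deriv_zero_of_const_on d.hJ hv h1 ht4
  -- derived mink identities along the curve
  have htl : ∀ w ∈ d.J, mink (d.t w) (d.l w) = 0 := by
    intro w hw
    have h1 : HasDerivAt (fun s => mink (d.l s) (d.l s))
        (mink (d.t w) (d.l w) + mink (d.l w) (d.t w)) w :=
      hasDerivAt_mink (hlD w hw) (hlD w hw)
    have h2 := deriv_zero_of_const_on d.hJ hw h1 d.hll
    rw [mink_comm (d.l w) (d.t w)] at h2
    linarith
  have ht'l : mink (deriv d.t v) (d.l v) = -1 := by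
    have h1 : HasDerivAt (fun s => mink (d.t s) (d.l s))
        (mink (deriv d.t v) (d.l v) + mink (d.t v) (d.t v)) v :=
      hasDerivAt_mink (htD v hv) (hlD v hv)
    have h2 := deriv_zero_of_const_on d.hJ hv h1 htl
    have h3 : mink (d.t v) (d.t v) = 1 := d.htt v hv
    linarith
  have ht't : mink (deriv d.t v) (d.t v) = 0 := by
    have h1 : HasDerivAt (fun s => mink (d.t s) (d.t s))
        (mink (deriv d.t v) (d.t v) + mink (d.t v) (deriv d.t v)) v :=
      hasDerivAt_mink (htD v hv) (htD v hv)
    have h2 := deriv_zero_of_const_on d.hJ hv h1 d.htt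
    rw [mink_comm (d.t v) (deriv d.t v)] at h2
    linarith
  -- Frenet-type expansion of t'
  have hexp : deriv d.t v = d.kappa v • d.n v + (-1 : ℝ) • d.l v := by
    have := ortho3 (d.hlplane v hv) (ht4 v hv) (d.hnplane v hv) ht'4
      (d.hll v hv) (d.htt v hv) (d.hnn v hv)
      (by rw [mink_comm]; exact htl v hv) (d.hln v hv) (d.htn v hv)
    rw [this, ht'l, ht't]
    have hk : mink (deriv d.t v) (d.n v) = d.kappa v := rfl
    rw [hk]
    funext i
    simp only [Pi.add_apply, Pi.smul_apply, smul_eq_mul]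
    ring
  -- first-order relation between f'' and g''
  have hR : deriv d.f u * deriv (deriv d.f) u = deriv d.g u * deriv (deriv d.g) u := by
    have h1 : HasDerivAt (fun s => (deriv d.f s) ^ 2 - (deriv d.g s) ^ 2)
        (2 * deriv d.f u * deriv (deriv d.f) u - 2 * deriv d.g u * deriv (deriv d.g) u) u := by
      have ha := ((hfD2 u hu).pow 2).sub ((hgD2 u hu).pow 2)
      exact ha.congr_deriv (by norm_num)
    have h2 := deriv_zero_of_const_on d.hI hu h1 d.hunit
    linarith
  have hU : (deriv d.f u) ^ 2 - (deriv d.g u) ^ 2 = 1 := d.hunit u hu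
  have hfpos : 0 < d.f u := d.hfpos u hu
  have hfne : d.f u ≠ 0 := ne_of_gt hfpos
  -- derivatives of z
  have hz_u : ∀ x ∈ d.I, HasDerivAt (fun s => d.z s v)
      (deriv d.f x • d.l v + deriv d.g x • e4) x := by
    intro x hx
    exact ((hfD x hx).smul_const (d.l v)).add ((hgD x hx).smul_const e4)
  have hz_v : ∀ w ∈ d.J, HasDerivAt (fun s => d.z u s) (d.f u • d.t w) w := by
    intro w hw
    have h1 : HasDerivAt (fun s => d.f u • d.l s) (d.f u • d.t w) w :=
      (hlD w hw).const_smul (d.f u)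
    exact h1.add_const (d.g u • e4)
  have hzu : deriv (fun u' => d.z u' v) u = deriv d.f u • d.l v + deriv d.g u • e4 :=
    (hz_u u hu).deriv
  have hzv : deriv (fun v' => d.z u v') v = d.f u • d.t v :=
    (hz_v v hv).deriv
  have hzuu : deriv (fun u' => deriv (fun u'' => d.z u'' v) u') u
      = deriv (deriv d.f) u • d.l v + deriv (deriv d.g) u • e4 := by
    have h1 : deriv (fun u' => deriv (fun u'' => d.z u'' v) u') u
        = deriv (fun u' => deriv d.f u' • d.l v + deriv d.g u' • e4) u :=
      deriv_congr_on d.hI hu (fun x hx => (hz_u x hx).deriv)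
    rw [h1]
    exact (((hfD2 u hu).smul_const (d.l v)).add ((hgD2 u hu).smul_const e4)).deriv
  have hzvv : deriv (fun v' => deriv (fun v'' => d.z u v'') v') v
      = d.f u • deriv d.t v := by
    have h1 : deriv (fun v' => deriv (fun v'' => d.z u v'') v') v
        = deriv (fun v' => d.f u • d.t v') v :=
      deriv_congr_on d.hJ hv (fun w hw => (hz_v w hw).deriv)
    rw [h1]
    exact ((htD v hv).const_smul (d.f u)).deriv
  -- the value of H
  have hkm : d.kappaM u = deriv d.f u * deriv (deriv d.g) u
      - deriv d.g u * deriv (deriv d.f) u := rfl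
  have hHval : d.H u v = (d.kappa v / (2 * d.f u)) • d.n v
      + ((d.f u * d.kappaM u + deriv d.g u) / (2 * d.f u)) • d.n2 u v := by
    show (1 / 2 : ℝ) • (deriv (fun u' => deriv (fun u'' => d.z u'' v) u') u
        + (1 / (d.f u) ^ 2) • deriv (fun v' => deriv (fun v'' => d.z u v'') v') v
        + (deriv d.f u / d.f u) • deriv (fun u' => d.z u' v) u)
      = (d.kappa v / (2 * d.f u)) • d.n v
        + ((d.f u * d.kappaM u + deriv d.g u) / (2 * d.f u))
          • (deriv d.g u • d.l v + deriv d.f u • e4)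
    rw [hzuu, hzvv, hzu, hexp, hkm]
    set f0 := d.f u; set f1 := deriv d.f u; set f2 := deriv (deriv d.f) u
    set g1 := deriv d.g u; set g2 := deriv (deriv d.g) u; set k := d.kappa v
    have Cl : (1 / 2 : ℝ) * (f2 + 1 / f0 ^ 2 * (f0 * (-1)) + f1 / f0 * f1)
        = (f0 * (f1 * g2 - g1 * f2) + g1) / (2 * f0) * g1 := by
      field_simp
      linear_combination (f0 * f1) * hR + (1 - f0 * f2) * hU
    have Cn : (1 / 2 : ℝ) * (1 / f0 ^ 2 * (f0 * k)) = k / (2 * f0) := by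
      field_simp
    have Ce : (1 / 2 : ℝ) * (g2 + f1 / f0 * g1)
        = (f0 * (f1 * g2 - g1 * f2) + g1) / (2 * f0) * f1 := by
      field_simp
      linear_combination (f0 * g1) * hR - (f0 * g2) * hU
    funext i
    simp only [Pi.add_apply, Pi.smul_apply, smul_eq_mul]
    linear_combination (d.l v i) * Cl + (d.n v i) * Cn + (e4 i) * Ce
  -- mink value table
  have me4e4 : mink e4 e4 = -1 := by simp [mink, e4]
  have mle4 : mink (d.l v) e4 = 0 := by
    simp [mink, e4, d.hlplane v hv]
  have me4l : mink e4 (d.l v) = 0 := by rw [mink_comm]; exact mle4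
  have mne4 : mink (d.n v) e4 = 0 := by
    simp [mink, e4, d.hnplane v hv]
  have me4n : mink e4 (d.n v) = 0 := by rw [mink_comm]; exact mne4
  have mnl : mink (d.n v) (d.l v) = 0 := by rw [mink_comm]; exact d.hln v hv
  have mnt : mink (d.n v) (d.t v) = 0 := by rw [mink_comm]; exact d.htn v hv
  have mlt : mink (d.l v) (d.t v) = 0 := by rw [mink_comm]; exact htl v hv
  have me4t : mink e4 (d.t v) = 0 := by
    rw [mink_comm]; simp [mink, e4, ht4 v hv]
  have mll := d.hll v hv
  have mnn := d.hnn v hv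
  have hn2 : d.n2 u v = deriv d.g u • d.l v + deriv d.f u • e4 := rfl
  refine ⟨hHval, ?_, ?_, ?_⟩
  · rw [hHval, hzu, hn2]
    simp only [mink_add_left, mink_add_right, mink_smul_left, mink_smul_right,
      me4e4, mle4, me4l, mne4, me4n, mnl, mll]
    ring
  · rw [hHval, hzv, hn2]
    simp only [mink_add_left, mink_add_right, mink_smul_left, mink_smul_right,
      mnt, mlt, me4t]
    ring
  · rw [hHval, hn2]
    have mln := d.hln v hv
    simp only [mink_add_left, mink_add_right, mink_smul_left, mink_smul_right,
      me4e4, mle4, me4l, mne4, me4n, mnl, mln, mll, mnn]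
    field_simp
    linear_combination (-(4 * (d.f u * d.kappaM u + deriv d.g u) ^ 2)) * hU
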